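/- Backward direction of the kSUM reduction for three machines: let x_1,…,x_h be positive integers, T = Σ_{i=1}^h x_i, and k, B positive integers with 1 ≤ k < h and B < T. Consider the three-machine JIT flow-shop instance with kh+2 jobs: for each i ∈ {1,…,k} and j ∈ {1,…,h} a job J_{ij} with p^(1)_{ij} = x_j, p^(2)_{ij} = T − x_j, p^(3)_{ij} = 1, w_{ij} = T, d_{ij} = kT + i + 1; a job J_{kh+1} with p^(1)_{kh+1} = 1, p^(2)_{kh+1} = B, p^(3)_{kh+1} = 1, w_{kh+1} = k²(T+1)², d_{kh+1} = B + 2; and a job J_{kh+2} with p^(1)_{kh+2} = kT − B, p^(2)_{kh+2} = kT, p^(3)_{kh+2} = 1, w_{kh+2} = k²(T+1)², d_{kh+2} = 2kT + 2. If this instance admits a feasible set E with Σ_{j∈E} w_j ≥ kT + 2k²(T+1)², then there exist indices j_1,…,j_k ∈ {1,…,h} (not necessarily distinct) with x_{j_1} + … + x_{j_k} = B; moreover any such E contains both J_{kh+1} and J_{kh+2} and exactly k of the jobs J_{ij}, whose x-values sum to B. -/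

import Mathlib

/-!
Only the two heavy jobs can pay for the weight bound, and the regular jobs `J_{ij}` of one
row `i` all complete on the last machine at the same time `kT + i + 2`; so `E` contains both
heavy jobs and exactly one job `J_{i,f(i)}` per row. The operation of `J_{kh+2}` on machine 2
starts at some `s ≤ kT + 1`, and every regular job must leave machine 2 before `s`.
Packing the first operations into `[0, s]` gives `∑ x_{f(i)} + 1 + (kT - B) ≤ kT + 1`, and
packing the second operations, together with that of `J_{kh+1}` on `[1, B + 1]`, into `[1, s]`
gives `B + ∑ (T - x_{f(i)}) ≤ kT`. Hence `∑ x_{f(i)} = B`.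
-/

open Finset

/-- A just-in-time flow-shop instance on `m` machines with jobs of type `J`:
`p i j` is the (positive integer) processing time of job `j` on machine `i`,
`d j` its positive integer due date and `w j` its positive integer weight. -/
structure JITInstance (m : ℕ) (J : Type) where
  p : Fin m → J → ℕ
  d : J → ℕ
  w : J → ℕ
  p_pos : ∀ i j, 0 < p i j
  d_pos : ∀ j, 0 < d j
  w_pos : ∀ j, 0 < w j

/-- `S` is a JIT schedule of the job set `E`: on every machine the processing
intervals `(S i j, S i j + p i j]` of distinct jobs of `E` are pairwise disjoint,
each job's operation on machine `i+1` starts no earlier than its completion on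
machine `i`, and every job of `E` completes on the last machine exactly at its
due date.  (Start times are nonnegative automatically, being naturals.) -/
def IsJITSchedule {m : ℕ} {J : Type} (I : JITInstance m J)
    (E : Finset J) (S : Fin m → J → ℕ) : Prop :=
  (∀ i : Fin m, ∀ j ∈ E, ∀ j' ∈ E, j ≠ j' →
      S i j + I.p i j ≤ S i j' ∨ S i j' + I.p i j' ≤ S i j) ∧
  (∀ j ∈ E, ∀ i i' : Fin m, i'.val = i.val + 1 →
      S i j + I.p i j ≤ S i' j) ∧
  (∀ j ∈ E, ∀ i : Fin m, i.val = m - 1 →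
      S i j + I.p i j = I.d j)

/-- A job set is feasible if it admits a JIT schedule. -/
def Feasible {m : ℕ} {J : Type} (I : JITInstance m J) (E : Finset J) : Prop :=
  ∃ S : Fin m → J → ℕ, IsJITSchedule I E S

/-- The three-machine JIT flow-shop instance constructed in the kSUM reduction:
for each `i ∈ {1,…,k}`, `j ∈ {1,…,h}` a job `J_{ij}` (encoded `Sum.inl (i, j)`,
0-indexed) with `p¹ = x j`, `p² = T - x j`, `p³ = 1`, `w = T`, `d = kT + i + 1`;
a job `J_{kh+1}` (encoded `Sum.inr false`) with `p¹ = 1`, `p² = B`, `p³ = 1`,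
`w = k²(T+1)²`, `d = B + 2`; and a job `J_{kh+2}` (encoded `Sum.inr true`) with
`p¹ = kT - B`, `p² = kT`, `p³ = 1`, `w = k²(T+1)²`, `d = 2kT + 2`, where
`T = ∑ i, x i`. -/
def ksumInstance3 (h k B : ℕ) (x : Fin h → ℕ) (hx : ∀ i, 0 < x i)
    (hk : 1 ≤ k) (hkh : k < h) (hB : 0 < B) (hBT : B < ∑ i, x i) :
    JITInstance 3 (Fin k × Fin h ⊕ Bool) where
  p := fun i jb =>
    if i.val = 0 then
      Sum.elim (fun q => x q.2)
        (fun b => if b then k * (∑ i, x i) - B else 1) jb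
    else if i.val = 1 then
      Sum.elim (fun q => (∑ i, x i) - x q.2)
        (fun b => if b then k * (∑ i, x i) else B) jb
    else 1
  d := Sum.elim (fun q => k * (∑ i, x i) + q.1.val + 2)
    (fun b => if b then 2 * k * (∑ i, x i) + 2 else B + 2)
  w := Sum.elim (fun _ => ∑ i, x i)
    (fun _ => k ^ 2 * ((∑ i, x i) + 1) ^ 2)
  p_pos := by
    have hT : (∑ i, x i) ≤ k * (∑ i, x i) := Nat.le_mul_of_pos_left _ (by omega)
    have hxT : ∀ j : Fin h, x j < ∑ i, x i := by
      intro j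
      obtain ⟨j', hj'⟩ := Fintype.exists_ne_of_one_lt_card
        (by simpa using (by omega : 1 < h)) j
      exact Finset.single_lt_sum hj' (Finset.mem_univ _)
        (Finset.mem_univ _) (hx j') (fun _ _ _ => Nat.zero_le _)
    intro i jb
    try dsimp only
    split
    · rcases jb with ⟨a, j⟩ | b
      · simpa using hx j
      · rcases b with _ | _ <;> simp <;> omega
    · split
      · rcases jb with ⟨a, j⟩ | b
        · have := hxT j
          simp only [Sum.elim_inl]
          omega
        · rcases b with _ | _ <;> simp <;> omega
      · exact one_pos
  d_pos := by
    rintro (⟨a, j⟩ | b)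
    · simp only [Sum.elim_inl]
      omega
    · rcases b with _ | _ <;> simp
  w_pos := by
    rintro (⟨a, j⟩ | b)
    · simp only [Sum.elim_inl]
      omega
    · simp only [Sum.elim_inr]
      exact Nat.mul_pos (pow_pos (by omega : 0 < k) 2)
        (pow_pos (by omega : 0 < (∑ i, x i) + 1) 2)

lemma sum_le_sub_of_pairwise_disjoint_Ioc {α : Type*} {F : Finset α} {s len : α → ℕ}
    {L R : ℕ}
    (hdisj : ∀ a ∈ F, ∀ b ∈ F, a ≠ b → s a + len a ≤ s b ∨ s b + len b ≤ s a)
    (hL : ∀ a ∈ F, L ≤ s a) (hR : ∀ a ∈ F, s a + len a ≤ R) :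
    ∑ a ∈ F, len a ≤ R - L := by
  classical
  calc ∑ a ∈ F, len a = #(F.biUnion fun a => Ioc (s a) (s a + len a)) := by
        rw [card_biUnion]
        · simp
        intro a ha b hb hne
        simp only [Function.onFun, disjoint_left, mem_Ioc]
        intro t ht ht'
        rcases hdisj a ha b hb hne with hab | hba <;> omega
    _ ≤ #(Ioc L R) := card_le_card fun t ht => by
        simp only [mem_biUnion, mem_Ioc] at ht ⊢
        obtain ⟨a, ha, h1, h2⟩ := ht
        exact ⟨(hL a ha).trans_lt h1, h2.trans (hR a ha)⟩
    _ = R - L := Nat.card_Ioc L R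

lemma lt_sum_of_pos {ι : Type*} [Fintype ι] [Nontrivial ι] {x : ι → ℕ} (hx : ∀ i, 0 < x i)
    (j : ι) : x j < ∑ i, x i := by
  obtain ⟨j', hj'⟩ := exists_ne j
  exact single_lt_sum hj' (mem_univ j) (mem_univ j') (hx j') fun _ _ _ => Nat.zero_le _

lemma exists_eq_image_graph_of_injOn_fst {α β : Type*} [Fintype α] [DecidableEq α]
    [DecidableEq β] {A : Finset (α × β)} (hinj : Set.InjOn Prod.fst (A : Set (α × β)))
    (hcard : #A = Fintype.card α) : ∃ f : α → β, A = univ.image fun a => (a, f a) := by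
  have hfst : A.image Prod.fst = univ :=
    eq_univ_of_card _ ((card_image_of_injOn hinj).trans hcard)
  have hsec : ∀ a, ∃ b, (a, b) ∈ A := fun a => by
    obtain ⟨q, hq, rfl⟩ := mem_image.1 (hfst ▸ mem_univ a)
    exact ⟨q.2, hq⟩
  choose f hf using hsec
  refine ⟨f, (eq_of_subset_of_card_le ?_ ?_).symm⟩
  · simpa [subset_iff] using hf
  · rw [hcard, card_image_of_injective _ fun a b hab => congrArg Prod.fst hab, card_univ]

lemma inr_mem_of_toRight_eq_univ {α β : Type*} [Fintype β] {E : Finset (α ⊕ β)}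
    (hR : E.toRight = univ) (b : β) : .inr b ∈ E :=
  mem_toRight.1 (hR ▸ mem_univ b)

namespace IsJITSchedule

variable {m : ℕ} {J : Type} {I : JITInstance m J} {E : Finset J} {S : Fin m → J → ℕ}

lemma sum_p_le_sub (hS : IsJITSchedule I E S) (i : Fin m) {F : Finset J} (hF : F ⊆ E)
    {L R : ℕ} (hL : ∀ j ∈ F, L ≤ S i j) (hR : ∀ j ∈ F, S i j + I.p i j ≤ R) :
    ∑ j ∈ F, I.p i j ≤ R - L :=
  sum_le_sub_of_pairwise_disjoint_Ioc (fun a ha b hb => hS.1 i a (hF ha) b (hF hb)) hL hR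

lemma eq_of_p_eq_of_d_eq (hS : IsJITSchedule I E S) {i : Fin m} (hi : i.val = m - 1)
    {j j' : J} (hj : j ∈ E) (hj' : j' ∈ E) (hp : I.p i j = I.p i j') (hd : I.d j = I.d j') :
    j = j' := by
  by_contra hne
  have hc := hS.2.2 j hj i hi
  have hc' := hS.2.2 j' hj' i hi
  have := I.p_pos i j
  rcases hS.1 i j hj j' hj' hne with h | h <;> omega

lemma flow_three {I : JITInstance 3 J} {S : Fin 3 → J → ℕ} (hS : IsJITSchedule I E S) {j : J}
    (hj : j ∈ E) :
    S 0 j + I.p 0 j ≤ S 1 j ∧ S 1 j + I.p 1 j ≤ S 2 j ∧ S 2 j + I.p 2 j = I.d j :=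
  ⟨hS.2.1 j hj 0 1 rfl, hS.2.1 j hj 1 2 rfl, hS.2.2 j hj 2 rfl⟩

end IsJITSchedule

namespace ksumInstance3

variable {h k B : ℕ} {x : Fin h → ℕ} {hx : ∀ i, 0 < x i} {hk : 1 ≤ k} {hkh : k < h}
  {hB : 0 < B} {hBT : B < ∑ i, x i}

local notation "𝓘" => ksumInstance3 h k B x hx hk hkh hB hBT

@[simp] lemma p_zero_inl (q : Fin k × Fin h) : (𝓘).p 0 (.inl q) = x q.2 := rfl
@[simp] lemma p_zero_inr_false : (𝓘).p 0 (.inr false) = 1 := rfl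
@[simp] lemma p_zero_inr_true : (𝓘).p 0 (.inr true) = k * ∑ i, x i - B := rfl
@[simp] lemma p_one_inl (q : Fin k × Fin h) : (𝓘).p 1 (.inl q) = (∑ i, x i) - x q.2 := rfl
@[simp] lemma p_one_inr_false : (𝓘).p 1 (.inr false) = B := rfl
@[simp] lemma p_one_inr_true : (𝓘).p 1 (.inr true) = k * ∑ i, x i := rfl
@[simp] lemma p_two (jb : Fin k × Fin h ⊕ Bool) : (𝓘).p 2 jb = 1 := rfl
@[simp] lemma d_inl (q : Fin k × Fin h) : (𝓘).d (.inl q) = k * (∑ i, x i) + q.1 + 2 := rfl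
@[simp] lemma d_inr_false : (𝓘).d (.inr false) = B + 2 := rfl
@[simp] lemma d_inr_true : (𝓘).d (.inr true) = 2 * k * (∑ i, x i) + 2 := rfl
@[simp] lemma w_inl (q : Fin k × Fin h) : (𝓘).w (.inl q) = ∑ i, x i := rfl
@[simp] lemma w_inr (b : Bool) : (𝓘).w (.inr b) = k ^ 2 * ((∑ i, x i) + 1) ^ 2 := rfl

variable {E : Finset (Fin k × Fin h ⊕ Bool)} {S : Fin 3 → Fin k × Fin h ⊕ Bool → ℕ}

lemma start_one_inr_false (hS : IsJITSchedule 𝓘 E S) (hf : .inr false ∈ E) :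
    S 1 (.inr false) = 1 := by
  obtain ⟨h01, h12, h2⟩ := hS.flow_three hf
  simp only [p_zero_inr_false, p_one_inr_false, p_two, d_inr_false] at h01 h12 h2
  omega

lemma start_one_inr_true_le (hS : IsJITSchedule 𝓘 E S) (ht : .inr true ∈ E) :
    S 1 (.inr true) ≤ k * (∑ i, x i) + 1 := by
  obtain ⟨-, h12, h2⟩ := hS.flow_three ht
  simp only [p_one_inr_true, p_two, d_inr_true] at h12 h2
  linarith

lemma injOn_fst_toLeft (hS : IsJITSchedule 𝓘 E S) :
    Set.InjOn Prod.fst (E.toLeft : Set (Fin k × Fin h)) := by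
  intro q hq q' hq' hfst
  simpa using hS.eq_of_p_eq_of_d_eq (i := 2) rfl (mem_toLeft.1 hq) (mem_toLeft.1 hq')
    (by simp) (by simp [hfst])

lemma card_toLeft_le (hS : IsJITSchedule 𝓘 E S) : #E.toLeft ≤ k := by
  simpa using card_le_card_of_injOn Prod.fst (fun _ _ => mem_coe.2 (mem_univ _))
    (injOn_fst_toLeft hS)

lemma sum_w (E : Finset (Fin k × Fin h ⊕ Bool)) :
    ∑ jb ∈ E, (𝓘).w jb =
      #E.toLeft * (∑ i, x i) + #E.toRight * (k ^ 2 * ((∑ i, x i) + 1) ^ 2) := by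
  simp [sum_sum_eq_sum_toLeft_add_sum_toRight]

lemma toRight_eq_univ_and_card_toLeft_eq (hS : IsJITSchedule 𝓘 E S)
    (hwt : k * (∑ i, x i) + 2 * (k ^ 2 * ((∑ i, x i) + 1) ^ 2) ≤ ∑ jb ∈ E, (𝓘).w jb) :
    E.toRight = univ ∧ #E.toLeft = k := by
  rw [sum_w] at hwt
  have hW : 0 < k ^ 2 * ((∑ i, x i) + 1) ^ 2 := Nat.mul_pos (pow_pos hk 2) (by positivity)
  have hleft := Nat.mul_le_mul_right (∑ i, x i) (card_toLeft_le hS)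
  have hright : #E.toRight ≤ 2 := by simpa using card_le_univ E.toRight
  have hright2 : #E.toRight = 2 := by
    by_contra hne
    have := Nat.mul_le_mul_right (k ^ 2 * ((∑ i, x i) + 1) ^ 2) (by omega : #E.toRight ≤ 1)
    omega
  refine ⟨eq_univ_of_card _ hright2, le_antisymm (card_toLeft_le hS) ?_⟩
  rw [hright2] at hwt
  exact Nat.le_of_mul_le_mul_right (by omega) (by omega : 0 < ∑ i, x i)

lemma sub_le_start_one_inr_true (hS : IsJITSchedule 𝓘 E S) (ht : .inr true ∈ E) :
    k * (∑ i, x i) - B ≤ S 1 (.inr true) := by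
  obtain ⟨h01, -, -⟩ := hS.flow_three ht
  simp only [p_zero_inr_true] at h01
  omega

lemma end_one_inl_le_start_one_inr_true (hS : IsJITSchedule 𝓘 E S) {q : Fin k × Fin h}
    (hq : .inl q ∈ E) (ht : .inr true ∈ E) :
    S 1 (.inl q) + ((∑ i, x i) - x q.2) ≤ S 1 (.inr true) := by
  have : Nontrivial (Fin h) := Fin.nontrivial_iff_two_le.2 (by omega)
  have hxq := lt_sum_of_pos hx q.2
  have hkT : k + ∑ i, x i ≤ k * (∑ i, x i) + 1 := by nlinarith
  have ht1 := sub_le_start_one_inr_true hS ht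
  obtain ⟨-, hq12, hq2⟩ := hS.flow_three hq
  simp only [p_one_inl, p_two, d_inl] at hq12 hq2
  have hrow := q.1.isLt
  -- `q` cannot follow the long operation of `inr true` on machine 2: it would miss its due date
  have hd := hS.1 1 _ hq _ ht (by simp)
  simp only [p_one_inl, p_one_inr_true] at hd
  omega

lemma sum_x_toLeft_le (hS : IsJITSchedule 𝓘 E S) (hR : E.toRight = univ) :
    ∑ q ∈ E.toLeft, x q.2 ≤ B := by
  have hf := inr_mem_of_toRight_eq_univ hR false
  have ht := inr_mem_of_toRight_eq_univ hR true
  have hBk : B < k * ∑ i, x i := hBT.trans_le (Nat.le_mul_of_pos_left _ hk)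
  have hs := start_one_inr_true_le hS ht
  have hs1 := sub_le_start_one_inr_true hS ht
  have hpack := hS.sum_p_le_sub 0 subset_rfl (L := 0) (R := S 1 (.inr true))
    (fun _ _ => Nat.zero_le _) ?_
  · rw [sum_sum_eq_sum_toLeft_add_sum_toRight, hR, Fintype.sum_bool] at hpack
    simp only [p_zero_inl, p_zero_inr_true, p_zero_inr_false] at hpack
    omega
  rintro (q | b) hjb
  · have h01 := (hS.flow_three hjb).1
    have := end_one_inl_le_start_one_inr_true hS hjb ht
    simp only [p_zero_inl] at h01 ⊢
    omega
  · cases b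
    · have h01 := (hS.flow_three hf).1
      simp only [p_zero_inr_false, start_one_inr_false hS hf] at h01 ⊢
      omega
    · exact (hS.flow_three ht).1

lemma le_sum_x_toLeft (hS : IsJITSchedule 𝓘 E S) (hR : E.toRight = univ)
    (hcard : #E.toLeft = k) : B ≤ ∑ q ∈ E.toLeft, x q.2 := by
  have hf := inr_mem_of_toRight_eq_univ hR false
  have ht := inr_mem_of_toRight_eq_univ hR true
  have : Nontrivial (Fin h) := Fin.nontrivial_iff_two_le.2 (by omega)
  have hBk : B < k * ∑ i, x i := hBT.trans_le (Nat.le_mul_of_pos_left _ hk)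
  have hsum : ∑ q ∈ E.toLeft, ((∑ i, x i) - x q.2) + ∑ q ∈ E.toLeft, x q.2 =
      k * ∑ i, x i := by
    rw [← sum_add_distrib,
      sum_congr rfl fun q _ => Nat.sub_add_cancel (lt_sum_of_pos hx q.2).le, sum_const, hcard,
      smul_eq_mul]
  have hs := start_one_inr_true_le hS ht
  have hs1 := sub_le_start_one_inr_true hS ht
  have hf1 := start_one_inr_false hS hf
  have hpack := hS.sum_p_le_sub 1 (F := E.toLeft.disjSum {false})
    (disjSum_subset.2 ⟨subset_rfl, by simp [hR]⟩) (L := 1) (R := S 1 (.inr true)) ?_ ?_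
  · rw [sum_disjSum, sum_singleton] at hpack
    simp only [p_one_inl, p_one_inr_false] at hpack
    omega
  · rintro (q | b) hjb <;> simp only [inl_mem_disjSum, inr_mem_disjSum, mem_singleton] at hjb
    · have h01 := (hS.flow_three (mem_toLeft.1 hjb)).1
      have := hx q.2
      simp only [p_zero_inl] at h01
      omega
    · rw [hjb, hf1]
  · rintro (q | b) hjb <;> simp only [inl_mem_disjSum, inr_mem_disjSum, mem_singleton] at hjb
    · exact end_one_inl_le_start_one_inr_true hS (mem_toLeft.1 hjb) ht
    · subst hjb
      have hd := hS.1 1 _ hf _ ht (by simp)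
      simp only [p_one_inr_false, p_one_inr_true, hf1] at hd ⊢
      omega

end ksumInstance3

/-- backward direction of the kSUM reduction for three machines.
If the constructed instance has a feasible set `E` of total weight at least
`kT + 2k²(T+1)²`, then some `k` of the numbers `x 0, …, x (h-1)` (with
repetitions allowed) sum to `B`; moreover any such `E` contains both
`J_{kh+1}` and `J_{kh+2}` together with exactly `k` of the jobs `J_{ij}`,
whose `x`-values sum to `B`. -/
theorem ksum_three_machines_backward (h k B : ℕ) (x : Fin h → ℕ)
    (hx : ∀ i, 0 < x i) (hk : 1 ≤ k) (hkh : k < h) (hB : 0 < B)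
    (hBT : B < ∑ i, x i)
    (E : Finset (Fin k × Fin h ⊕ Bool))
    (hfeas : Feasible (ksumInstance3 h k B x hx hk hkh hB hBT) E)
    (hwt : k * (∑ i, x i) + 2 * (k ^ 2 * ((∑ i, x i) + 1) ^ 2)
      ≤ ∑ jb ∈ E, (ksumInstance3 h k B x hx hk hkh hB hBT).w jb) :
    (∃ f : Fin k → Fin h, ∑ i, x (f i) = B) ∧
    Sum.inr false ∈ E ∧ Sum.inr true ∈ E ∧
    (E.filter (fun jb => jb.isLeft)).card = k ∧
    ∑ jb ∈ E, Sum.elim (fun q : Fin k × Fin h => x q.2) (fun _ => 0) jb = B := by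
  obtain ⟨S, hS⟩ := hfeas
  obtain ⟨hR, hcard⟩ := ksumInstance3.toRight_eq_univ_and_card_toLeft_eq hS hwt
  have hX : ∑ q ∈ E.toLeft, x q.2 = B :=
    (ksumInstance3.sum_x_toLeft_le hS hR).antisymm (ksumInstance3.le_sum_x_toLeft hS hR hcard)
  obtain ⟨f, hf⟩ := exists_eq_image_graph_of_injOn_fst (ksumInstance3.injOn_fst_toLeft hS)
    (by rw [hcard, Fintype.card_fin])
  refine ⟨⟨f, ?_⟩, inr_mem_of_toRight_eq_univ hR false, inr_mem_of_toRight_eq_univ hR true,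
    ?_, ?_⟩
  · rw [← hX, hf, sum_image fun a _ b _ hab => congrArg Prod.fst hab]
  · rw [card_filter, sum_sum_eq_sum_toLeft_add_sum_toRight]
    simpa using hcard
  · rw [sum_sum_eq_sum_toLeft_add_sum_toRight]
    simpa using hX
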